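/- Let a > 0 and let 𝒞 be the space of continuous u : [-1,1]\{0} → ℝ with u(1) = u(-1) and finite limit lim_{s→0}|s|u(s), normed by ‖u‖_𝒞 = sup_{s≠0}|s||u(s)|. Then the map J_a defined by J_a(u)(s) = -|s|u(1)/2 + |s|(1-s²)^{-a}u(s) - 2a|s|∫₀^s t(1-t²)^{-(a+1)}u(t)dt for s ≠ 0 and J_a(u)(0) = lim_{t→0}|t|u(t) maps 𝒞 into D^a, and there is a constant C > 0 with ‖J_a(u)‖_{D^a} ≤ C‖u‖_𝒞 for all u ∈ 𝒞. -/

import Mathlib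

open Filter Topology MeasureTheory

noncomputable def DaInt (a : ℝ) (f : ℝ → ℝ) (s : ℝ) : ℝ :=
  ∫ t in (0:ℝ)..s, (1 - t ^ 2) ^ (a - 1) * f t

noncomputable def DaLim (a : ℝ) (f : ℝ → ℝ) (e : ℝ) : ℝ :=
  limUnder (𝓝[Set.Ioo (-1:ℝ) 1] e) (DaInt a f)

def MemDa (a : ℝ) (f : ℝ → ℝ) : Prop :=
  ContinuousOn f (Set.Ioo (-1:ℝ) 1) ∧
  Tendsto (fun s => (1 - s ^ 2) ^ a * f s) (𝓝[Set.Ioo (-1:ℝ) 1] 1) (𝓝 0) ∧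
  Tendsto (fun s => (1 - s ^ 2) ^ a * f s) (𝓝[Set.Ioo (-1:ℝ) 1] (-1)) (𝓝 0) ∧
  (∃ L : ℝ, Tendsto (DaInt a f) (𝓝[Set.Ioo (-1:ℝ) 1] 1) (𝓝 L)) ∧
  (∃ L : ℝ, Tendsto (DaInt a f) (𝓝[Set.Ioo (-1:ℝ) 1] (-1)) (𝓝 L))

noncomputable def DaNorm (a : ℝ) (f : ℝ → ℝ) : ℝ :=
  (⨆ s : Set.Ioo (-1:ℝ) 1, (1 - (s:ℝ) ^ 2) ^ a * |f (s:ℝ)|) +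
    ⨆ s : Set.Ioo (-1:ℝ) 1, |DaInt a f (s:ℝ)|

/-- The (possibly improper) integral `∫_0^s f(t)(1-t^2)^(a-1) dt`, where for `s = ±1`
it is interpreted as the improper limit. -/
noncomputable def DaIntE (a : ℝ) (f : ℝ → ℝ) (s : ℝ) : ℝ :=
  if s ∈ Set.Ioo (-1:ℝ) 1 then DaInt a f s else DaLim a f s

/-- `I_a(f)(s) = sign s * (s⁻¹ (1-s²)^a f(s) + 2a ∫_{-sign s}^s f(t)(1-t²)^(a-1) dt)`. -/
noncomputable def Ia (a : ℝ) (f : ℝ → ℝ) (s : ℝ) : ℝ :=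
  Real.sign s *
    (s⁻¹ * (1 - s ^ 2) ^ a * f s + 2 * a * (DaIntE a f s - DaIntE a f (-Real.sign s)))

/-- `J_a(u)(s) = -|s|u(1)/2 + |s|(1-s²)^{-a}u(s) - 2a|s| ∫_0^s t(1-t²)^{-(a+1)}u(t) dt`
for `s ≠ 0`, and `J_a(u)(0) = lim_{t→0} |t|u(t)`. -/
noncomputable def Ja (a : ℝ) (u : ℝ → ℝ) (s : ℝ) : ℝ :=
  if s = 0 then limUnder (𝓝[≠] (0:ℝ)) (fun t => |t| * u t)
  else |s| * (-u 1 / 2) + |s| * (1 - s ^ 2) ^ (-a) * u s -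
    2 * a * |s| * ∫ t in (0:ℝ)..s, t * (1 - t ^ 2) ^ (-(a + 1)) * u t

def MemC (u : ℝ → ℝ) : Prop :=
  ContinuousOn u (Set.Icc (-1:ℝ) 1 \ {0}) ∧ u 1 = u (-1) ∧
  ∃ L : ℝ, Tendsto (fun s => |s| * u s) (𝓝[Set.Icc (-1:ℝ) 1 \ {0}] 0) (𝓝 L)

noncomputable def CNorm (u : ℝ → ℝ) : ℝ :=
  ⨆ s : (Set.Icc (-1:ℝ) 1 \ {0} : Set ℝ), |(s:ℝ)| * |u (s:ℝ)|

open Set intervalIntegral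

lemma one_sub_sq_pos {t : ℝ} (ht : t ∈ Set.Ioo (-1:ℝ) 1) : 0 < 1 - t ^ 2 := by
  nlinarith [ht.1, ht.2]

lemma contOn_w (p : ℝ) : ContinuousOn (fun t : ℝ => (1 - t ^ 2) ^ p) (Set.Ioo (-1:ℝ) 1) :=
  fun t ht => (((continuous_const.sub (continuous_pow 2)).continuousAt).rpow_const
    (Or.inl (one_sub_sq_pos ht).ne')).continuousWithinAt

lemma hasDerivAt_w (p : ℝ) {t : ℝ} (ht : t ∈ Set.Ioo (-1:ℝ) 1) :
    HasDerivAt (fun t : ℝ => (1 - t ^ 2) ^ p) (p * (1 - t ^ 2) ^ (p - 1) * (-2 * t)) t := by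
  have h1 : HasDerivAt (fun t : ℝ => 1 - t ^ 2) (-(2 * t)) t := by
    simpa using (hasDerivAt_pow 2 t).const_sub 1
  have h2 := h1.rpow_const (p := p) (Or.inl (one_sub_sq_pos ht).ne')
  convert h2 using 1
  ring

lemma hasDerivAt_W (a : ℝ) {t : ℝ} (ht : t ∈ Set.Ioo (-1:ℝ) 1) :
    HasDerivAt (fun t : ℝ => (1 - t ^ 2) ^ (-a)) (2 * a * (t * (1 - t ^ 2) ^ (-(a+1)))) t := by
  have h := hasDerivAt_w (-a) ht
  rw [show -a - 1 = -(a+1) by ring] at h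
  convert h using 1
  ring

lemma uIcc_subset_Ioo {c s : ℝ} (hc : c ∈ Set.Ioo (-1:ℝ) 1) (hs : s ∈ Set.Ioo (-1:ℝ) 1) :
    Set.uIcc c s ⊆ Set.Ioo (-1:ℝ) 1 :=
  Set.ordConnected_Ioo.uIcc_subset hc hs

lemma integral_w (a : ℝ) {c s : ℝ} (hc : c ∈ Set.Ioo (-1:ℝ) 1) (hs : s ∈ Set.Ioo (-1:ℝ) 1) :
    ∫ t in c..s, 2 * a * (t * (1 - t ^ 2) ^ (-(a+1))) =
      (1 - s ^ 2) ^ (-a) - (1 - c ^ 2) ^ (-a) := by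
  have hsub := uIcc_subset_Ioo hc hs
  refine integral_eq_sub_of_hasDerivAt (fun x hx => hasDerivAt_W a (hsub hx)) ?_
  apply ContinuousOn.intervalIntegrable
  exact (continuous_const.continuousOn.mul
    (continuousOn_id.mul ((contOn_w (-(a+1))).mono hsub))).congr (fun x hx => rfl)

lemma PW {a s : ℝ} (hs : s ∈ Set.Ioo (-1:ℝ) 1) :
    (1 - s ^ 2) ^ a * (1 - s ^ 2) ^ (-a) = 1 := by
  rw [← Real.rpow_add (one_sub_sq_pos hs)]
  simp

lemma W_nonneg (a : ℝ) {s : ℝ} (hs : s ∈ Set.Ioo (-1:ℝ) 1) : 0 ≤ (1 - s ^ 2) ^ (-a) :=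
  Real.rpow_nonneg (one_sub_sq_pos hs).le _

lemma P_nonneg (a : ℝ) {s : ℝ} (hs : s ∈ Set.Ioo (-1:ℝ) 1) : 0 ≤ (1 - s ^ 2) ^ a :=
  Real.rpow_nonneg (one_sub_sq_pos hs).le _

lemma P_le_one (a : ℝ) (ha : 0 < a) {s : ℝ} (hs : s ∈ Set.Ioo (-1:ℝ) 1) :
    (1 - s ^ 2) ^ a ≤ 1 :=
  Real.rpow_le_one (one_sub_sq_pos hs).le (by nlinarith [sq_nonneg s]) ha.le
noncomputable def gf (a : ℝ) (u : ℝ → ℝ) (t : ℝ) : ℝ := t * (1 - t ^ 2) ^ (-(a + 1)) * u t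

noncomputable def Gf (a : ℝ) (u : ℝ → ℝ) (s : ℝ) : ℝ := ∫ t in (0:ℝ)..s, gf a u t

lemma Scal : Set.Ioo (-1:ℝ) 1 \ {0} ⊆ Set.Icc (-1:ℝ) 1 \ {0} :=
  Set.diff_subset_diff_left Set.Ioo_subset_Icc_self

/-- Bound on `|t| * |u t|` from `MemC`. -/
lemma memC_bound {u : ℝ → ℝ} (hu : MemC u) :
    ∀ t ∈ Set.Icc (-1:ℝ) 1 \ {0}, |t| * |u t| ≤ CNorm u := by
  obtain ⟨hc, -, L, hL⟩ := hu
  set V : ℝ → ℝ := fun t => if t = 0 then L else |t| * u t with hV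
  have hVeq : ∀ t ∈ Set.Icc (-1:ℝ) 1 \ {0}, V t = |t| * u t := by
    intro t ht
    have hne : t ≠ 0 := by simpa using ht.2
    simp only [hV, if_neg hne]
  have hVcont : ContinuousOn V (Set.Icc (-1:ℝ) 1) := by
    intro x hx
    by_cases hx0 : x = 0
    · subst hx0
      rw [← continuousWithinAt_diff_self]
      have h2 : Tendsto V (𝓝[Set.Icc (-1:ℝ) 1 \ {0}] 0) (𝓝 L) := by
        refine hL.congr' ?_
        filter_upwards [eventually_mem_nhdsWithin] with t ht
        exact (hVeq t ht).symm
      have hV0 : V 0 = L := if_pos rfl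
      show Tendsto V (𝓝[Set.Icc (-1:ℝ) 1 \ {0}] 0) (𝓝 (V 0))
      rw [hV0]; exact h2
    · have hmem : {(0:ℝ)}ᶜ ∈ 𝓝[Set.Icc (-1:ℝ) 1] x :=
        mem_nhdsWithin_of_mem_nhds (isOpen_compl_singleton.mem_nhds hx0)
      have heq : 𝓝[Set.Icc (-1:ℝ) 1 \ {0}] x = 𝓝[Set.Icc (-1:ℝ) 1] x := by
        rw [Set.diff_eq, Set.inter_comm]
        exact nhdsWithin_inter_of_mem hmem
      have hcv : ContinuousWithinAt (fun t => |t| * u t) (Set.Icc (-1:ℝ) 1 \ {0}) x :=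
        (continuous_abs.continuousWithinAt).mul (hc x ⟨hx, hx0⟩)
      have h3 : ContinuousWithinAt V (Set.Icc (-1:ℝ) 1 \ {0}) x :=
        hcv.congr hVeq (hVeq x ⟨hx, hx0⟩)
      show Tendsto V (𝓝[Set.Icc (-1:ℝ) 1] x) (𝓝 (V x))
      rw [← heq]; exact h3
  obtain ⟨M0, hM0⟩ := isCompact_Icc.exists_bound_of_continuousOn hVcont
  have hbdd : BddAbove (Set.range fun s : (Set.Icc (-1:ℝ) 1 \ {0} : Set ℝ) => |(s:ℝ)| * |u (s:ℝ)|) := by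
    refine ⟨M0, ?_⟩
    rintro x ⟨s, rfl⟩
    have h1 : |(s:ℝ)| * |u (s:ℝ)| = ‖V (s:ℝ)‖ := by
      rw [hVeq _ s.2, Real.norm_eq_abs, abs_mul, abs_abs]
    exact le_of_eq_of_le h1 (hM0 _ s.2.1)
  intro t ht
  exact le_ciSup hbdd (⟨t, ht⟩ : (Set.Icc (-1:ℝ) 1 \ {0} : Set ℝ))

lemma cnorm_nonneg {u : ℝ → ℝ} (hu : MemC u) : 0 ≤ CNorm u := by
  have h := memC_bound hu 1 (by norm_num)
  exact le_trans (by positivity) h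

lemma contOn_g (a : ℝ) {u : ℝ → ℝ} (hu : MemC u) :
    ContinuousOn (gf a u) (Set.Ioo (-1:ℝ) 1 \ {0}) :=
  ((continuous_id.continuousOn.mul ((contOn_w (-(a+1))).mono Set.diff_subset)).mul
    (hu.1.mono Scal))

lemma ae_ne_zero : ∀ᵐ (t : ℝ) ∂volume, t ≠ 0 := by
  rw [MeasureTheory.ae_iff]
  simpa [Set.setOf_eq_eq_singleton] using Real.volume_singleton (a := 0)

lemma aesm_restrict {f : ℝ → ℝ} (hf : ContinuousOn f (Set.Ioo (-1:ℝ) 1 \ {0}))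
    {A : Set ℝ} (hA : A \ {0} ⊆ Set.Ioo (-1:ℝ) 1 \ {0}) :
    AEStronglyMeasurable f (volume.restrict A) := by
  have h1 : AEStronglyMeasurable f (volume.restrict (Set.Ioo (-1:ℝ) 1 \ {0})) :=
    hf.aestronglyMeasurable (measurableSet_Ioo.diff (measurableSet_singleton 0))
  have h2 : AEStronglyMeasurable f (volume.restrict (A \ {0})) := h1.mono_set hA
  have h3 : (A \ {0} : Set ℝ) =ᵐ[volume] A :=
    MeasureTheory.diff_ae_eq_self.mpr
      (by refine measure_mono_null ?_ (measure_singleton (0:ℝ)); exact Set.inter_subset_right)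
  rwa [Measure.restrict_congr_set h3] at h2

lemma sq_le_of_uIoc {s t : ℝ} (ht : t ∈ Set.uIoc 0 s) : t ^ 2 ≤ s ^ 2 := by
  rcases le_total 0 s with h | h
  · rw [Set.uIoc_of_le h] at ht
    nlinarith [ht.1, ht.2]
  · rw [Set.uIoc_comm, Set.uIoc_of_le h] at ht
    nlinarith [ht.1, ht.2]

lemma uIoc_sub_Ioo {s : ℝ} (hs : s ∈ Set.Ioo (-1:ℝ) 1) :
    Set.uIoc 0 s ⊆ Set.Ioo (-1:ℝ) 1 :=
  Set.uIoc_subset_uIcc.trans (uIcc_subset_Ioo (by norm_num) hs)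

lemma intable_of_bound {f : ℝ → ℝ} (hf : ContinuousOn f (Set.Ioo (-1:ℝ) 1 \ {0}))
    {s : ℝ} (hs : s ∈ Set.Ioo (-1:ℝ) 1) {Cb : ℝ}
    (hbd : ∀ t ∈ Set.uIoc 0 s, t ≠ 0 → |f t| ≤ Cb) :
    IntervalIntegrable f volume 0 s := by
  rw [intervalIntegrable_iff]
  have hsub : Set.uIoc 0 s \ {0} ⊆ Set.Ioo (-1:ℝ) 1 \ {0} :=
    Set.diff_subset_diff_left (uIoc_sub_Ioo hs)
  have hconst : IntegrableOn (fun _ : ℝ => Cb) (Set.uIoc 0 s) volume :=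
    integrableOn_const (by rw [Set.uIoc]; exact measure_Ioc_lt_top.ne)
  refine Integrable.mono' hconst (aesm_restrict hf hsub) ?_
  filter_upwards [ae_restrict_mem measurableSet_uIoc,
    MeasureTheory.ae_restrict_of_ae ae_ne_zero] with t htm htn
  rw [Real.norm_eq_abs]
  exact hbd t htm htn

lemma gf_bound {a : ℝ} (ha : 0 < a) {u : ℝ → ℝ} (hu : MemC u) {t : ℝ}
    (ht : t ∈ Set.Ioo (-1:ℝ) 1) (htn : t ≠ 0) (p : ℝ) (hp : p ≤ 0) :
    |t * (1 - t ^ 2) ^ p * u t| ≤ CNorm u * (1 - t ^ 2) ^ p := by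
  have hw : (0:ℝ) ≤ (1 - t ^ 2) ^ p := Real.rpow_nonneg (one_sub_sq_pos ht).le _
  have h1 : |t * (1 - t ^ 2) ^ p * u t| = |t| * |u t| * (1 - t ^ 2) ^ p := by
    rw [abs_mul, abs_mul, abs_of_nonneg hw]; ring
  rw [h1]
  exact mul_le_mul_of_nonneg_right
    (memC_bound hu t ⟨Set.Ioo_subset_Icc_self ht, by simpa using htn⟩) hw

lemma intable_g {a : ℝ} (ha : 0 < a) {u : ℝ → ℝ} (hu : MemC u) {s : ℝ}
    (hs : s ∈ Set.Ioo (-1:ℝ) 1) : IntervalIntegrable (gf a u) volume 0 s := by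
  refine intable_of_bound (contOn_g a hu) hs
    (Cb := CNorm u * (1 - s ^ 2) ^ (-(a+1))) ?_
  intro t htm htn
  have ht : t ∈ Set.Ioo (-1:ℝ) 1 := uIoc_sub_Ioo hs htm
  refine le_trans (gf_bound ha hu ht htn (-(a+1)) (by linarith)) ?_
  refine mul_le_mul_of_nonneg_left ?_ (cnorm_nonneg hu)
  exact Real.rpow_le_rpow_of_nonpos (one_sub_sq_pos hs) (by nlinarith [sq_le_of_uIoc htm]) (by linarith)

lemma contOn_G {a : ℝ} (ha : 0 < a) {u : ℝ → ℝ} (hu : MemC u) :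
    ContinuousOn (Gf a u) (Set.Ioo (-1:ℝ) 1) := by
  intro s hs
  set r : ℝ := (1 + |s|) / 2 with hr
  have hsr : |s| < r := by rw [hr]; rw [Set.mem_Ioo, ← abs_lt] at hs; linarith [hs]
  have hr1 : r < 1 := by rw [hr]; rw [Set.mem_Ioo, ← abs_lt] at hs; linarith [hs]
  have hr0 : 0 < r := lt_of_le_of_lt (abs_nonneg s) hsr
  have hrI : r ∈ Set.Ioo (-1:ℝ) 1 := ⟨by linarith, hr1⟩
  have hrI' : -r ∈ Set.Ioo (-1:ℝ) 1 := ⟨by linarith, by linarith⟩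
  have hint : IntervalIntegrable (gf a u) volume (-r) r :=
    ((intable_g ha hu hrI').symm).trans (intable_g ha hu hrI)
  have h0m : (0:ℝ) ∈ Set.uIcc (-r) r := by
    rw [Set.uIcc_of_le (by linarith)]
    exact ⟨by linarith, by linarith⟩
  have hcont := intervalIntegral.continuousOn_primitive_interval' hint h0m
  have hsm : s ∈ Set.Ioo (-r) r := Set.mem_Ioo.mpr (abs_lt.mp hsr)
  have : ContinuousAt (Gf a u) s := by
    refine (hcont.continuousAt ?_).congr ?_
    · rw [Set.uIcc_of_le (by linarith)]
      exact Icc_mem_nhds hsm.1 hsm.2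
    · rfl
  exact this.continuousWithinAt

lemma isOpen_IooD : IsOpen (Set.Ioo (-1:ℝ) 1 \ {0}) := by
  rw [Set.diff_eq]
  exact isOpen_Ioo.inter isOpen_compl_singleton

lemma hasDerivAt_G {a : ℝ} (ha : 0 < a) {u : ℝ → ℝ} (hu : MemC u) {s : ℝ}
    (hs : s ∈ Set.Ioo (-1:ℝ) 1) (hsn : s ≠ 0) :
    HasDerivAt (Gf a u) (gf a u s) s := by
  have hmem : s ∈ Set.Ioo (-1:ℝ) 1 \ {0} := ⟨hs, by simpa using hsn⟩
  have hnb := isOpen_IooD.mem_nhds hmem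
  exact intervalIntegral.integral_hasDerivAt_right (intable_g ha hu hs)
    ((contOn_g a hu).stronglyMeasurableAtFilter isOpen_IooD s hmem)
    ((contOn_g a hu).continuousAt hnb)

lemma W_ge_Wc {a : ℝ} (ha : 0 < a) {c s : ℝ} (hs : s ∈ Set.Ioo (-1:ℝ) 1)
    (h2 : c ^ 2 ≤ s ^ 2) : (1 - c ^ 2) ^ (-a) ≤ (1 - s ^ 2) ^ (-a) :=
  Real.rpow_le_rpow_of_nonpos (one_sub_sq_pos hs) (by linarith) (by linarith)

lemma W_ge_one {a : ℝ} (ha : 0 < a) {s : ℝ} (hs : s ∈ Set.Ioo (-1:ℝ) 1) :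
    1 ≤ (1 - s ^ 2) ^ (-a) := by
  have := W_ge_Wc (c := 0) ha hs (by nlinarith [sq_nonneg s])
  simpa using this

lemma G_bound {a : ℝ} (ha : 0 < a) {u : ℝ → ℝ} (hu : MemC u) {s : ℝ}
    (hs : s ∈ Set.Ioo (-1:ℝ) 1) :
    |Gf a u s| ≤ CNorm u * ((3/4 : ℝ) ^ (-(a+1)) + (1 - s ^ 2) ^ (-a) / a) := by
  set M := CNorm u with hMdef
  have hM0 : 0 ≤ M := cnorm_nonneg hu
  set c₀ : ℝ := (3/4 : ℝ) ^ (-(a+1)) with hc₀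
  have hc₀0 : 0 ≤ c₀ := Real.rpow_nonneg (by norm_num) _
  set σ : ℝ := if 0 ≤ s then 1 else -1 with hσ
  have hσs : ∀ t ∈ Set.uIoc 0 s, σ * t = |t| := by
    intro t ht
    rcases le_or_gt 0 s with h | h
    · rw [Set.uIoc_of_le h] at ht
      rw [hσ, if_pos h, one_mul, abs_of_pos ht.1]
    · rw [Set.uIoc_comm, Set.uIoc_of_le h.le] at ht
      rw [hσ, if_neg (not_le.mpr h), abs_of_nonpos ht.2]; ring
  set b : ℝ → ℝ := fun t => M * c₀ + M / a * σ * (2 * a * (t * (1 - t ^ 2) ^ (-(a+1)))) with hb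
  have hbint : IntervalIntegrable b volume 0 s := by
    apply ContinuousOn.intervalIntegrable
    have hsub := uIcc_subset_Ioo (show (0:ℝ) ∈ Set.Ioo (-1:ℝ) 1 by norm_num) hs
    exact continuousOn_const.add (continuousOn_const.mul
      ((continuous_const.continuousOn.mul
        (continuousOn_id.mul ((contOn_w (-(a+1))).mono hsub)))))
  have hbval : ∫ t in (0:ℝ)..s, b t
      = M * c₀ * s + M / a * σ * ((1 - s ^ 2) ^ (-a) - 1) := by
    rw [hb]
    rw [intervalIntegral.integral_add (intervalIntegrable_const)
      (by
        have hsub := uIcc_subset_Ioo (show (0:ℝ) ∈ Set.Ioo (-1:ℝ) 1 by norm_num) hs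
        exact (continuousOn_const.mul
          ((continuous_const.continuousOn.mul
            (continuousOn_id.mul ((contOn_w (-(a+1))).mono hsub))))).intervalIntegrable)]
    rw [intervalIntegral.integral_const, intervalIntegral.integral_const_mul]
    rw [integral_w a (show (0:ℝ) ∈ Set.Ioo (-1:ℝ) 1 by norm_num) hs]
    simp [Real.one_rpow]
    ring
  have hptw : ∀ᵐ t ∂volume.restrict (Set.uIoc 0 s), ‖gf a u t‖ ≤ b t := by
    filter_upwards [ae_restrict_mem measurableSet_uIoc,
      MeasureTheory.ae_restrict_of_ae ae_ne_zero] with t htm htn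
    have ht : t ∈ Set.Ioo (-1:ℝ) 1 := uIoc_sub_Ioo hs htm
    have hw0 : (0:ℝ) ≤ (1 - t ^ 2) ^ (-(a+1)) := Real.rpow_nonneg (one_sub_sq_pos ht).le _
    have h1 : |gf a u t| ≤ M * (1 - t ^ 2) ^ (-(a+1)) := gf_bound ha hu ht htn (-(a+1)) (by linarith)
    have hσt := hσs t htm
    have hbt : b t = M * c₀ + M / a * (2 * a * (|t| * (1 - t ^ 2) ^ (-(a+1)))) := by
      show M * c₀ + M / a * σ * (2 * a * (t * (1 - t ^ 2) ^ (-(a+1)))) = _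
      have h5 : σ * (2 * a * (t * (1 - t ^ 2) ^ (-(a+1)))) =
          2 * a * ((σ * t) * (1 - t ^ 2) ^ (-(a+1))) := by ring
      rw [mul_assoc (M / a), h5, hσt]
    rw [Real.norm_eq_abs, hbt]
    have h2a : M / a * (2 * a * (|t| * (1 - t ^ 2) ^ (-(a+1)))) =
        2 * M * (|t| * (1 - t ^ 2) ^ (-(a+1))) := by
      field_simp
    rw [h2a]
    rcases le_total |t| (1/2 : ℝ) with hhalf | hhalf
    · have hbase : (3/4 : ℝ) ≤ 1 - t ^ 2 := by
        have := abs_nonneg t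
        nlinarith [sq_abs t]
      have : (1 - t ^ 2) ^ (-(a+1)) ≤ c₀ :=
        Real.rpow_le_rpow_of_nonpos (by norm_num) hbase (by linarith)
      nlinarith [abs_nonneg t, hw0, mul_nonneg (mul_nonneg hM0 (abs_nonneg t)) hw0]
    · have h3 : M * (1 - t ^ 2) ^ (-(a+1)) ≤ 2 * M * (|t| * (1 - t ^ 2) ^ (-(a+1)))  := by
        nlinarith [mul_nonneg hM0 hw0]
      nlinarith [mul_nonneg hM0 hc₀0]
  have hnorm := intervalIntegral.norm_integral_le_abs_of_norm_le hptw hbint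
  rw [Real.norm_eq_abs] at hnorm
  refine le_trans hnorm ?_
  rw [hbval]
  have hW1 : 1 ≤ (1 - s ^ 2) ^ (-a) := W_ge_one ha hs
  have hs1 : |s| ≤ 1 := by
    rw [Set.mem_Ioo, ← abs_lt] at hs; exact hs.le
  have hσabs : |σ| = 1 := by
    rcases le_or_gt 0 s with h | h
    · rw [hσ, if_pos h]; norm_num
    · rw [hσ, if_neg (not_le.mpr h)]; norm_num
  calc |M * c₀ * s + M / a * σ * ((1 - s ^ 2) ^ (-a) - 1)|
      ≤ |M * c₀ * s| + |M / a * σ * ((1 - s ^ 2) ^ (-a) - 1)| := abs_add_le _ _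
    _ = M * c₀ * |s| + M / a * ((1 - s ^ 2) ^ (-a) - 1) := by
        rw [abs_mul, abs_mul, abs_mul, abs_mul, hσabs, abs_of_nonneg hM0, abs_of_nonneg hc₀0,
          abs_of_nonneg (by positivity : (0:ℝ) ≤ M / a),
          abs_of_nonneg (by linarith : (0:ℝ) ≤ (1 - s ^ 2) ^ (-a) - 1)]
        ring
    _ ≤ M * c₀ + M / a * (1 - s ^ 2) ^ (-a) := by
        have h1 : M * c₀ * |s| ≤ M * c₀ := by nlinarith [mul_nonneg hM0 hc₀0, abs_nonneg s]
        have h2 : M / a * ((1 - s ^ 2) ^ (-a) - 1) ≤ M / a * (1 - s ^ 2) ^ (-a) := by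
          have : (0:ℝ) ≤ M / a := by positivity
          nlinarith
        linarith
    _ = M * (c₀ + (1 - s ^ 2) ^ (-a) / a) := by field_simp

set_option maxHeartbeats 1000000 in
lemma keylim {a : ℝ} (ha : 0 < a) {ρ : ℝ → ℝ} {C : ℝ}
    (hi : ∀ s ∈ Set.Ioo (-1:ℝ) 1, IntervalIntegrable (gf a ρ) volume 0 s)
    (hρ : Tendsto ρ (𝓝[Set.Ioo (0:ℝ) 1] 1) (𝓝 C)) :
    Tendsto (fun s => (1 - s ^ 2) ^ a * Gf a ρ s) (𝓝[Set.Ioo (0:ℝ) 1] 1)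
      (𝓝 (C / (2 * a))) := by
  rw [Metric.tendsto_nhds]
  intro ε hε
  set ε₁ : ℝ := a * ε / 2 with hε₁def
  have hε₁ : 0 < ε₁ := by positivity
  have hev : ∀ᶠ t in 𝓝[Set.Ioo (0:ℝ) 1] 1, dist (ρ t) C < ε₁ :=
    Metric.tendsto_nhds.mp hρ ε₁ hε₁
  obtain ⟨δ, hδ0, hδ⟩ := Metric.mem_nhdsWithin_iff.mp hev
  set c : ℝ := max (1 - δ/2) (1/2) with hcdef
  have hc1 : c < 1 := max_lt (by linarith) (by norm_num)
  have hc0 : (0:ℝ) < c := lt_of_lt_of_le (by norm_num) (le_max_right _ _)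
  have hcI : c ∈ Set.Ioo (-1:ℝ) 1 := ⟨by linarith, hc1⟩
  have hcρ : ∀ t, c < t → t < 1 → |ρ t - C| ≤ ε₁ := by
    intro t h1 h2
    have hmem : t ∈ Set.Ioo (0:ℝ) 1 := ⟨lt_trans hc0 h1, h2⟩
    have hdist : dist t 1 < δ := by
      rw [Real.dist_eq, abs_of_nonpos (by linarith)]
      have h3 : 1 - δ/2 ≤ c := le_max_left _ _
      linarith
    have := hδ ⟨Metric.mem_ball.mpr hdist, hmem⟩
    rw [Set.mem_setOf_eq, Real.dist_eq] at this
    exact this.le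
  set Wc : ℝ := (1 - c ^ 2) ^ (-a) with hWcdef
  set A1 : ℝ := Gf a ρ c with hA1
  set Kc : ℝ := |A1 - C * Wc / (2 * a)| with hKc
  have hKc0 : 0 ≤ Kc := abs_nonneg _
  have e2 : Tendsto (fun s : ℝ => (1 - s ^ 2) ^ a) (𝓝[Set.Ioo (0:ℝ) 1] 1) (𝓝 0) := by
    have h1 : Tendsto (fun s : ℝ => 1 - s ^ 2) (𝓝[Set.Ioo (0:ℝ) 1] 1) (𝓝 0) := by
      have hcont : Continuous fun s : ℝ => 1 - s ^ 2 := by continuity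
      have := (hcont.tendsto 1).mono_left (nhdsWithin_le_nhds (s := Set.Ioo (0:ℝ) 1))
      simpa using this
    have h2 : ContinuousAt (fun x : ℝ => x ^ a) 0 :=
      Real.continuousAt_rpow_const 0 a (Or.inr ha.le)
    have h3 := h2.tendsto.comp h1
    simpa [Real.zero_rpow ha.ne', Function.comp_def] using h3
  have e3 : ∀ᶠ s in 𝓝[Set.Ioo (0:ℝ) 1] 1, (1 - s ^ 2) ^ a * (Kc + 1) < ε / 2 := by
    have h4 := e2.mul_const (Kc + 1)
    rw [zero_mul] at h4
    exact h4.eventually_lt_const (by positivity)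
  have e1 : ∀ᶠ s in 𝓝[Set.Ioo (0:ℝ) 1] 1, c < s :=
    Filter.eventually_of_mem (mem_nhdsWithin_of_mem_nhds (Ioi_mem_nhds hc1)) (fun x hx => hx)
  filter_upwards [e1, e3, eventually_mem_nhdsWithin] with s hcs hKs hs01
  have hsI : s ∈ Set.Ioo (-1:ℝ) 1 := ⟨by linarith [hs01.1], hs01.2⟩
  have hP0 : (0:ℝ) ≤ (1 - s ^ 2) ^ a := P_nonneg a hsI
  have hPWs : (1 - s ^ 2) ^ a * (1 - s ^ 2) ^ (-a) = 1 := PW hsI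
  have hWcWs : Wc ≤ (1 - s ^ 2) ^ (-a) := W_ge_Wc ha hsI (by nlinarith [hs01.2])
  have hWc0 : (0:ℝ) ≤ Wc := W_nonneg a hcI
  have hint_cs : IntervalIntegrable (gf a ρ) volume c s := (hi c hcI).symm.trans (hi s hsI)
  have eq1 : Gf a ρ s = A1 + ∫ t in c..s, gf a ρ t := by
    rw [hA1]
    show Gf a ρ s = Gf a ρ c + _
    rw [Gf, Gf, ← intervalIntegral.integral_add_adjacent_intervals (hi c hcI) hint_cs]
  have hwt_int : IntervalIntegrable (fun t => t * (1 - t ^ 2) ^ (-(a+1))) volume c s :=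
    (continuousOn_id.mul ((contOn_w (-(a+1))).mono
      (uIcc_subset_Ioo hcI hsI))).intervalIntegrable
  have hwt_val : ∫ t in c..s, t * (1 - t ^ 2) ^ (-(a+1))
      = ((1 - s ^ 2) ^ (-a) - Wc) / (2 * a) := by
    have h6 := integral_w a hcI hsI
    rw [intervalIntegral.integral_const_mul] at h6
    rw [eq_div_iff (by positivity : (2*a : ℝ) ≠ 0)]
    linarith [h6]
  have eq2 : ∫ t in c..s, gf a ρ t
      = (∫ t in c..s, (gf a ρ t - C * (t * (1 - t ^ 2) ^ (-(a+1)))))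
        + C * (((1 - s ^ 2) ^ (-a) - Wc) / (2 * a)) := by
    rw [intervalIntegral.integral_sub hint_cs (hwt_int.const_mul C),
      intervalIntegral.integral_const_mul, hwt_val]
    ring
  set E2 : ℝ := ∫ t in c..s, (gf a ρ t - C * (t * (1 - t ^ 2) ^ (-(a+1)))) with hE2
  have herr : |E2| ≤ ε₁ * (((1 - s ^ 2) ^ (-a) - Wc) / (2 * a)) := by
    have hptw : ∀ᵐ t ∂volume.restrict (Set.uIoc c s),
        ‖gf a ρ t - C * (t * (1 - t ^ 2) ^ (-(a+1)))‖
          ≤ ε₁ * (t * (1 - t ^ 2) ^ (-(a+1))) := by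
      filter_upwards [ae_restrict_mem measurableSet_uIoc] with t htm
      rw [Set.uIoc_of_le hcs.le] at htm
      have htI : t ∈ Set.Ioo (-1:ℝ) 1 := ⟨by linarith [htm.1], lt_of_le_of_lt htm.2 hs01.2⟩
      have ht0 : (0:ℝ) < t := lt_trans hc0 htm.1
      have hw0 : (0:ℝ) ≤ (1 - t ^ 2) ^ (-(a+1)) := Real.rpow_nonneg (one_sub_sq_pos htI).le _
      have hid : gf a ρ t - C * (t * (1 - t ^ 2) ^ (-(a+1)))
          = (t * (1 - t ^ 2) ^ (-(a+1))) * (ρ t - C) := by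
        rw [gf]; ring
      rw [Real.norm_eq_abs, hid, abs_mul,
        abs_of_nonneg (mul_nonneg ht0.le hw0)]
      have hρt := hcρ t htm.1 (lt_of_le_of_lt htm.2 hs01.2)
      calc t * (1 - t ^ 2) ^ (-(a+1)) * |ρ t - C|
          ≤ t * (1 - t ^ 2) ^ (-(a+1)) * ε₁ :=
            mul_le_mul_of_nonneg_left hρt (mul_nonneg ht0.le hw0)
        _ = ε₁ * (t * (1 - t ^ 2) ^ (-(a+1))) := by ring
    have h7 := intervalIntegral.norm_integral_le_abs_of_norm_le hptw (hwt_int.const_mul ε₁)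
    rw [Real.norm_eq_abs] at h7
    refine le_trans h7 ?_
    rw [intervalIntegral.integral_const_mul, hwt_val]
    rw [abs_of_nonneg (mul_nonneg hε₁.le (div_nonneg (by linarith) (by positivity)))]
  rw [Real.dist_eq]
  have key : (1 - s ^ 2) ^ a * Gf a ρ s - C / (2 * a)
      = (1 - s ^ 2) ^ a * (A1 - C * Wc / (2 * a)) + (1 - s ^ 2) ^ a * E2 := by
    rw [eq1, eq2]
    linear_combination (C / (2 * a)) * hPWs
  rw [key]
  have hb1 : |(1 - s ^ 2) ^ a * (A1 - C * Wc / (2 * a))| = (1 - s ^ 2) ^ a * Kc := by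
    rw [abs_mul, abs_of_nonneg hP0]
  have hb2 : |(1 - s ^ 2) ^ a * E2| ≤ ε / 4 := by
    rw [abs_mul, abs_of_nonneg hP0]
    have h8 : (1 - s ^ 2) ^ a * |E2|
        ≤ (1 - s ^ 2) ^ a * (ε₁ * (((1 - s ^ 2) ^ (-a) - Wc) / (2 * a))) :=
      mul_le_mul_of_nonneg_left herr hP0
    refine le_trans h8 ?_
    have h9 : (1 - s ^ 2) ^ a * (ε₁ * (((1 - s ^ 2) ^ (-a) - Wc) / (2 * a)))
        = ε₁ / (2 * a) * (1 - (1 - s ^ 2) ^ a * Wc) := by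
      linear_combination (ε₁ / (2 * a)) * hPWs
    have h11 : ε₁ / (2 * a) = ε / 4 := by
      rw [hε₁def]; field_simp; ring
    rw [h9, h11]
    have h10 : (0:ℝ) ≤ (1 - s ^ 2) ^ a * Wc := mul_nonneg hP0 hWc0
    linarith [mul_nonneg (show (0:ℝ) ≤ ε/4 by linarith) h10]
  calc |(1 - s ^ 2) ^ a * (A1 - C * Wc / (2 * a)) + (1 - s ^ 2) ^ a * E2|
      ≤ |(1 - s ^ 2) ^ a * (A1 - C * Wc / (2 * a))| + |(1 - s ^ 2) ^ a * E2| := abs_add_le _ _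
    _ ≤ (1 - s ^ 2) ^ a * Kc + ε / 4 := by rw [hb1]; linarith [hb2]
    _ < ε := by
        have h13 : (1 - s ^ 2) ^ a * Kc ≤ (1 - s ^ 2) ^ a * (Kc + 1) :=
          mul_le_mul_of_nonneg_left (by linarith) hP0
        linarith

lemma nf_one : 𝓝[Set.Ioo (-1:ℝ) 1] (1:ℝ) = 𝓝[Set.Ioo (0:ℝ) 1] (1:ℝ) := by
  have h1 : Set.Ioo (-1:ℝ) 1 ∩ Set.Ioi 0 = Set.Ioo (0:ℝ) 1 := by
    ext x
    simp only [Set.mem_inter_iff, Set.mem_Ioo, Set.mem_Ioi]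
    constructor
    · rintro ⟨⟨h1, h2⟩, h3⟩; exact ⟨h3, h2⟩
    · rintro ⟨h3, h2⟩; exact ⟨⟨by linarith, h2⟩, h3⟩
  rw [← h1]
  exact (nhdsWithin_inter_of_mem' (mem_nhdsWithin_of_mem_nhds (Ioi_mem_nhds one_pos))).symm

lemma nf_negone : 𝓝[Set.Ioo (-1:ℝ) 1] (-1:ℝ) = 𝓝[Set.Ioo (-1:ℝ) 0] (-1:ℝ) := by
  have h1 : Set.Ioo (-1:ℝ) 1 ∩ Set.Iio 0 = Set.Ioo (-1:ℝ) 0 := by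
    ext x
    simp only [Set.mem_inter_iff, Set.mem_Ioo, Set.mem_Iio]
    constructor
    · rintro ⟨⟨h1, h2⟩, h3⟩; exact ⟨h1, h3⟩
    · rintro ⟨h3, h2⟩; exact ⟨⟨h3, by linarith⟩, h2⟩
  rw [← h1]
  exact (nhdsWithin_inter_of_mem' (mem_nhdsWithin_of_mem_nhds
    (Iio_mem_nhds (by norm_num)))).symm

lemma nf_zero : 𝓝[≠] (0:ℝ) = 𝓝[Set.Ioo (-1:ℝ) 1 \ {0}] (0:ℝ) := by
  have h1 : ({(0:ℝ)}ᶜ : Set ℝ) ∩ Set.Ioo (-1:ℝ) 1 = Set.Ioo (-1:ℝ) 1 \ {0} := by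
    rw [Set.inter_comm, ← Set.diff_eq]
  rw [← h1]
  exact (nhdsWithin_inter_of_mem' (mem_nhdsWithin_of_mem_nhds
    (isOpen_Ioo.mem_nhds (by norm_num)))).symm

lemma mem_one : (1:ℝ) ∈ Set.Icc (-1:ℝ) 1 \ {0} := by norm_num

lemma mem_negone : (-1:ℝ) ∈ Set.Icc (-1:ℝ) 1 \ {0} := by norm_num

lemma limG_one {a : ℝ} (ha : 0 < a) {u : ℝ → ℝ} (hu : MemC u) :
    Tendsto (fun s => (1 - s ^ 2) ^ a * Gf a u s) (𝓝[Set.Ioo (0:ℝ) 1] 1)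
      (𝓝 (u 1 / (2 * a))) := by
  refine keylim ha (fun s hs => intable_g ha hu hs) ?_
  have h1 : ContinuousWithinAt u (Set.Icc (-1:ℝ) 1 \ {0}) 1 := hu.1 1 mem_one
  refine h1.tendsto.mono_left (nhdsWithin_mono _ ?_)
  intro x hx
  exact ⟨⟨by linarith [hx.1], hx.2.le⟩, by simp only [Set.mem_singleton_iff]; exact (ne_of_gt hx.1)⟩

lemma Gf_neg (a : ℝ) (u : ℝ → ℝ) (r : ℝ) : Gf a (fun t => u (-t)) r = Gf a u (-r) := by
  have h1 : ∀ x : ℝ, gf a (fun t => u (-t)) x = -gf a u (-x) := by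
    intro x
    rw [gf, gf]
    simp only [neg_sq]
    ring
  have h2 := intervalIntegral.integral_comp_neg (f := gf a u) (a := (0:ℝ)) (b := r)
  rw [neg_zero] at h2
  calc Gf a (fun t => u (-t)) r
      = ∫ x in (0:ℝ)..r, -gf a u (-x) :=
        intervalIntegral.integral_congr (fun x _ => h1 x)
    _ = -∫ x in (0:ℝ)..r, gf a u (-x) := intervalIntegral.integral_neg
    _ = -∫ x in (-r)..(0:ℝ), gf a u x := by rw [h2]
    _ = ∫ x in (0:ℝ)..(-r), gf a u x := (intervalIntegral.integral_symm _ _).symm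
    _ = Gf a u (-r) := rfl

lemma limG_negone {a : ℝ} (ha : 0 < a) {u : ℝ → ℝ} (hu : MemC u) :
    Tendsto (fun s => (1 - s ^ 2) ^ a * Gf a u s) (𝓝[Set.Ioo (-1:ℝ) 0] (-1))
      (𝓝 (u 1 / (2 * a))) := by
  set v : ℝ → ℝ := fun t => u (-t) with hv
  have hvi : ∀ s ∈ Set.Ioo (-1:ℝ) 1, IntervalIntegrable (gf a v) volume 0 s := by
    intro s hs
    have h1 : IntervalIntegrable (gf a u) volume 0 (-s) :=
      intable_g ha hu ⟨by linarith [hs.2], by linarith [hs.1]⟩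
    have h2 := ((IntervalIntegrable.iff_comp_neg (a := 0) (b := -s) (f := gf a u)).mp h1)
    rw [neg_zero, neg_neg] at h2
    have h3 := h2.neg
    refine h3.congr ?_
    intro x _
    show (-fun x => gf a u (-x)) x = gf a v x
    simp only [Pi.neg_apply, hv, gf, neg_sq]
    ring
  have hρv : Tendsto v (𝓝[Set.Ioo (0:ℝ) 1] 1) (𝓝 (u (-1))) := by
    have hc : ContinuousWithinAt u (Set.Icc (-1:ℝ) 1 \ {0}) (-1) := hu.1 (-1) mem_negone
    have hneg : Tendsto (fun t : ℝ => -t) (𝓝[Set.Ioo (0:ℝ) 1] 1)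
        (𝓝[Set.Icc (-1:ℝ) 1 \ {0}] (-1)) := by
      rw [tendsto_nhdsWithin_iff]
      constructor
      · have := (continuous_neg.tendsto (1:ℝ)).mono_left
          (nhdsWithin_le_nhds (s := Set.Ioo (0:ℝ) 1))
        simpa using this
      · filter_upwards [eventually_mem_nhdsWithin] with x hx
        exact ⟨⟨by linarith [hx.2], by linarith [hx.1]⟩,
          by simp only [Set.mem_singleton_iff]; intro h; linarith [hx.1, h, neg_eq_zero.mp h]⟩
    exact hc.tendsto.comp hneg
  have hk := keylim ha hvi hρv
  have hneg2 : Tendsto (fun s : ℝ => -s) (𝓝[Set.Ioo (-1:ℝ) 0] (-1)) (𝓝[Set.Ioo (0:ℝ) 1] 1) := by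
    rw [tendsto_nhdsWithin_iff]
    constructor
    · have := (continuous_neg.tendsto (-1:ℝ)).mono_left
        (nhdsWithin_le_nhds (s := Set.Ioo (-1:ℝ) 0))
      simpa using this
    · filter_upwards [eventually_mem_nhdsWithin] with x hx
      exact ⟨by linarith [hx.2], by linarith [hx.1]⟩
  have h4 := hk.comp hneg2
  rw [hu.2.1]
  refine Tendsto.congr ?_ h4
  intro s
  show (1 - (-s) ^ 2) ^ a * Gf a v (-s) = (1 - s ^ 2) ^ a * Gf a u s
  rw [Gf_neg a u (-s), neg_neg, neg_sq]

noncomputable def JE (a : ℝ) (u : ℝ → ℝ) (s : ℝ) : ℝ :=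
  |s| * (-u 1 / 2) + |s| * (1 - s ^ 2) ^ (-a) * u s - 2 * a * |s| * Gf a u s

lemma Ja_eq (a : ℝ) (u : ℝ → ℝ) {s : ℝ} (hs : s ≠ 0) : Ja a u s = JE a u s := by
  rw [Ja, if_neg hs]; rfl

lemma contOn_JE {a : ℝ} (ha : 0 < a) {u : ℝ → ℝ} (hu : MemC u) :
    ContinuousOn (JE a u) (Set.Ioo (-1:ℝ) 1 \ {0}) := by
  have habs : ContinuousOn (fun s : ℝ => |s|) (Set.Ioo (-1:ℝ) 1 \ {0}) :=
    continuous_abs.continuousOn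
  have h1 := hu.1.mono Scal
  have h2 := (contOn_w (-a)).mono (Set.diff_subset (t := {0}))
  have h3 := (contOn_G ha hu).mono (Set.diff_subset (t := {0}))
  exact ((habs.mul continuousOn_const).add ((habs.mul h2).mul h1)).sub
    ((continuousOn_const.mul habs).mul h3)

lemma Ja_zero {u : ℝ → ℝ} {L : ℝ}
    (hL : Tendsto (fun s => |s| * u s) (𝓝[Set.Icc (-1:ℝ) 1 \ {0}] 0) (𝓝 L)) (a : ℝ) :
    Ja a u 0 = L := by
  rw [Ja, if_pos rfl]
  refine Tendsto.limUnder_eq ?_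
  rw [nf_zero]
  exact hL.mono_left (nhdsWithin_mono _ Scal)

lemma contOn_Ja {a : ℝ} (ha : 0 < a) {u : ℝ → ℝ} (hu : MemC u) :
    ContinuousOn (Ja a u) (Set.Ioo (-1:ℝ) 1) := by
  obtain ⟨hcu, h11, L, hL⟩ := id hu
  intro s hs
  by_cases hs0 : s = 0
  · subst hs0
    rw [← continuousWithinAt_diff_self]
    have hJ0 : Ja a u 0 = L := Ja_zero hL a
    show Tendsto (Ja a u) (𝓝[Set.Ioo (-1:ℝ) 1 \ {0}] 0) (𝓝 (Ja a u 0))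
    rw [hJ0]
    have heq : ∀ᶠ t in 𝓝[Set.Ioo (-1:ℝ) 1 \ {0}] (0:ℝ), JE a u t = Ja a u t := by
      filter_upwards [eventually_mem_nhdsWithin] with t ht
      exact (Ja_eq a u (by simpa using ht.2)).symm
    refine Tendsto.congr' heq ?_
    have t1 : Tendsto (fun t : ℝ => |t|) (𝓝[Set.Ioo (-1:ℝ) 1 \ {0}] 0) (𝓝 0) := by
      have := (continuous_abs.tendsto (0:ℝ)).mono_left
        (nhdsWithin_le_nhds (s := Set.Ioo (-1:ℝ) 1 \ {0}))
      simpa using this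
    have t2 : Tendsto (fun t : ℝ => (1 - t ^ 2) ^ (-a)) (𝓝[Set.Ioo (-1:ℝ) 1 \ {0}] 0) (𝓝 1) := by
      have hca : ContinuousAt (fun t : ℝ => (1 - t ^ 2) ^ (-a)) 0 :=
        ((contOn_w (-a)).continuousAt (isOpen_Ioo.mem_nhds (by norm_num)))
      have h5 := hca.tendsto.mono_left
        (nhdsWithin_le_nhds (s := Set.Ioo (-1:ℝ) 1 \ {0}))
      have h6 : (1 - (0:ℝ) ^ 2) ^ (-a) = 1 := by norm_num
      rwa [h6] at h5
    have t3 : Tendsto (fun t => |t| * u t) (𝓝[Set.Ioo (-1:ℝ) 1 \ {0}] 0) (𝓝 L) :=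
      hL.mono_left (nhdsWithin_mono _ Scal)
    have t4 : Tendsto (Gf a u) (𝓝[Set.Ioo (-1:ℝ) 1 \ {0}] 0) (𝓝 0) := by
      have hcG := (contOn_G ha hu).continuousAt
        (isOpen_Ioo.mem_nhds (by norm_num) : Set.Ioo (-1:ℝ) 1 ∈ 𝓝 (0:ℝ))
      have hG0 : Gf a u 0 = 0 := intervalIntegral.integral_same
      have h7 := hcG.tendsto.mono_left
        (nhdsWithin_le_nhds (s := Set.Ioo (-1:ℝ) 1 \ {0}))
      rwa [hG0] at h7
    have tot := ((t1.mul_const (-u 1 / 2)).add (t2.mul t3)).sub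
      (((t1.mul t4).const_mul (2 * a)))
    have tot2 := tot.congr (f₂ := JE a u) (fun t => by simp only [JE]; ring)
    have hval : (0:ℝ) * (-u 1 / 2) + 1 * L - 2 * a * (0 * 0) = L := by ring
    rwa [hval] at tot2
  · have hmem : s ∈ Set.Ioo (-1:ℝ) 1 \ {0} := ⟨hs, by simpa using hs0⟩
    have hca : ContinuousAt (JE a u) s :=
      (contOn_JE ha hu).continuousAt (isOpen_IooD.mem_nhds hmem)
    have hev : JE a u =ᶠ[𝓝 s] Ja a u := by
      filter_upwards [isOpen_compl_singleton.mem_nhds (by simpa using hs0 :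
        s ∈ ({(0:ℝ)}ᶜ : Set ℝ))] with t ht
      exact (Ja_eq a u ht).symm
    exact (hca.congr hev).continuousWithinAt

lemma w_am1_bound {a s t : ℝ} (hs : s ∈ Set.Ioo (-1:ℝ) 1) (h2 : t ^ 2 ≤ s ^ 2)
    (ht : t ∈ Set.Ioo (-1:ℝ) 1) :
    (1 - t ^ 2) ^ (a - 1) ≤ max ((1 - s ^ 2) ^ (a - 1)) 1 := by
  rcases le_total (a - 1) 0 with h | h
  · exact le_max_of_le_left (Real.rpow_le_rpow_of_nonpos (one_sub_sq_pos hs) (by linarith) h)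
  · exact le_max_of_le_right (Real.rpow_le_one (one_sub_sq_pos ht).le
      (by nlinarith [sq_nonneg t]) h)

lemma JE_bound {a : ℝ} (ha : 0 < a) {u : ℝ → ℝ} (hu : MemC u) {t : ℝ}
    (ht : t ∈ Set.Ioo (-1:ℝ) 1) (htn : t ≠ 0) :
    |JE a u t| ≤ CNorm u * (1/2 + 3 * (1 - t ^ 2) ^ (-a) + 2 * a * (3/4:ℝ) ^ (-(a+1))) := by
  set M := CNorm u with hM
  have hM0 : 0 ≤ M := cnorm_nonneg hu
  have habs_t : |t| ≤ 1 := by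
    rw [Set.mem_Ioo, ← abs_lt] at ht; exact ht.le
  have hu1 : |u 1| ≤ M := by
    have := memC_bound hu 1 mem_one; simpa using this
  have hut : |t| * |u t| ≤ M := memC_bound hu t ⟨Set.Ioo_subset_Icc_self ht, by simpa using htn⟩
  have hWt0 : (0:ℝ) ≤ (1 - t ^ 2) ^ (-a) := W_nonneg a ht
  have hWt1 : (1:ℝ) ≤ (1 - t ^ 2) ^ (-a) := W_ge_one ha ht
  have hGb := G_bound ha hu ht
  have hc₀0 : (0:ℝ) ≤ (3/4:ℝ) ^ (-(a+1)) := Real.rpow_nonneg (by norm_num) _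
  have h1 : |JE a u t| ≤ |t| * (|u 1| / 2) + (1 - t ^ 2) ^ (-a) * (|t| * |u t|)
      + 2 * a * (|t| * |Gf a u t|) := by
    rw [JE]
    refine le_trans (abs_sub _ _) ?_
    gcongr
    · refine le_trans (abs_add_le _ _) ?_
      gcongr
      · rw [abs_mul, abs_abs]
        rw [abs_div, abs_neg]
        simp only [abs_of_pos (show (0:ℝ) < 2 by norm_num)]
        exact le_of_eq (by ring)
      · rw [abs_mul, abs_mul, abs_abs, abs_of_nonneg hWt0]
        exact le_of_eq (by ring)
    · rw [abs_mul, abs_mul, abs_mul, abs_abs]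
      simp only [abs_of_pos (show (0:ℝ) < 2 by norm_num), abs_of_pos ha]
      exact le_of_eq (by ring)
  refine le_trans h1 ?_
  have h2 : |t| * (|u 1| / 2) ≤ M * (1/2) := by nlinarith [abs_nonneg (u 1), abs_nonneg t]
  have h3 : (1 - t ^ 2) ^ (-a) * (|t| * |u t|) ≤ (1 - t ^ 2) ^ (-a) * M :=
    mul_le_mul_of_nonneg_left hut hWt0
  have h4 : |t| * |Gf a u t| ≤ M * ((3/4:ℝ) ^ (-(a+1)) + (1 - t ^ 2) ^ (-a) / a) := by
    have := abs_nonneg (Gf a u t)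
    nlinarith [hGb, mul_nonneg hM0 (by positivity : (0:ℝ) ≤ (3/4:ℝ) ^ (-(a+1)) + (1 - t ^ 2) ^ (-a) / a)]
  have h5 : 2 * a * (|t| * |Gf a u t|)
      ≤ 2 * a * (M * ((3/4:ℝ) ^ (-(a+1)) + (1 - t ^ 2) ^ (-a) / a)) :=
    mul_le_mul_of_nonneg_left h4 (by positivity)
  have h6 : 2 * a * (M * ((3/4:ℝ) ^ (-(a+1)) + (1 - t ^ 2) ^ (-a) / a))
      = 2 * a * M * (3/4:ℝ) ^ (-(a+1)) + 2 * M * (1 - t ^ 2) ^ (-a) := by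
    field_simp
  rw [h6] at h5
  nlinarith [h2, h3, h5]

lemma intable_jint {a : ℝ} (ha : 0 < a) {u : ℝ → ℝ} (hu : MemC u) {s : ℝ}
    (hs : s ∈ Set.Ioo (-1:ℝ) 1) :
    IntervalIntegrable (fun t => (1 - t ^ 2) ^ (a - 1) * Ja a u t) volume 0 s := by
  refine intable_of_bound ?_ hs (Cb := (max ((1 - s ^ 2) ^ (a-1)) 1) *
    (CNorm u * (1/2 + 3 * (1 - s ^ 2) ^ (-a) + 2 * a * (3/4:ℝ) ^ (-(a+1))))) ?_
  · refine (((contOn_w (a-1)).mono (Set.diff_subset (t := {0}))).mul (contOn_JE ha hu)).congr ?_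
    intro t ht
    show (1 - t ^ 2) ^ (a - 1) * Ja a u t = (1 - t ^ 2) ^ (a - 1) * JE a u t
    rw [Ja_eq a u (by simpa using ht.2)]
  · intro t htm htn
    have htI := uIoc_sub_Ioo hs htm
    have h2 := sq_le_of_uIoc htm
    have hWst : (1 - t ^ 2) ^ (-a) ≤ (1 - s ^ 2) ^ (-a) := W_ge_Wc ha hs h2
    have hM0 : 0 ≤ CNorm u := cnorm_nonneg hu
    have hc₀0 : (0:ℝ) ≤ (3/4:ℝ) ^ (-(a+1)) := Real.rpow_nonneg (by norm_num) _
    rw [Ja_eq a u htn, abs_mul, abs_of_nonneg (Real.rpow_nonneg (one_sub_sq_pos htI).le _)]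
    refine mul_le_mul (w_am1_bound hs h2 htI) ?_ (abs_nonneg _)
      (le_trans (Real.rpow_nonneg (one_sub_sq_pos hs).le _) (le_max_left _ _))
    refine le_trans (JE_bound ha hu htI htn) ?_
    refine mul_le_mul_of_nonneg_left ?_ hM0
    linarith

noncomputable def Phi (a : ℝ) (u : ℝ → ℝ) (s : ℝ) : ℝ :=
  (1 - s ^ 2) ^ a * Gf a u s - u 1 / (4 * a) * (1 - (1 - s ^ 2) ^ a)

lemma contOn_Phi {a : ℝ} (ha : 0 < a) {u : ℝ → ℝ} (hu : MemC u) :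
    ContinuousOn (Phi a u) (Set.Ioo (-1:ℝ) 1) :=
  ((contOn_w a).mul (contOn_G ha hu)).sub
    (continuousOn_const.mul (continuousOn_const.sub (contOn_w a)))

lemma Phi_zero (a : ℝ) (u : ℝ → ℝ) : Phi a u 0 = 0 := by
  have h : Gf a u 0 = 0 := intervalIntegral.integral_same
  rw [Phi, h]
  norm_num

lemma hasDerivAt_Phi {a : ℝ} (ha : 0 < a) {u : ℝ → ℝ} (hu : MemC u) {x : ℝ}
    (hx : x ∈ Set.Ioo (-1:ℝ) 1) (hxn : x ≠ 0) :
    HasDerivAt (Phi a u) (Real.sign x * ((1 - x ^ 2) ^ (a - 1) * Ja a u x)) x := by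
  have hpos := one_sub_sq_pos hx
  have hPne : (1 - x ^ 2) ^ a ≠ 0 := (Real.rpow_pos_of_pos hpos a).ne'
  have hG := hasDerivAt_G ha hu hx hxn
  have hP := hasDerivAt_w a hx
  have h1 := hP.mul hG
  have h2 := (hP.const_sub 1).const_mul (u 1 / (4 * a))
  have h3 := h1.sub h2
  have r1 : (1 - x ^ 2) ^ (a - 1) = (1 - x ^ 2) ^ a / (1 - x ^ 2) := by
    rw [Real.rpow_sub hpos, Real.rpow_one]
  have r2 : (1 - x ^ 2) ^ (-(a+1)) = ((1 - x ^ 2) ^ a * (1 - x ^ 2))⁻¹ := by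
    rw [Real.rpow_neg hpos.le, Real.rpow_add hpos, Real.rpow_one]
  have r3 : (1 - x ^ 2) ^ (-a) = ((1 - x ^ 2) ^ a)⁻¹ := by
    rw [Real.rpow_neg hpos.le]
  have hJ := Ja_eq a u hxn
  refine HasDerivAt.congr_deriv (f := Phi a u) h3 ?_
  rw [hJ, JE]
  simp only [gf]
  rcases lt_or_gt_of_ne hxn with hneg | hpos'
  · rw [Real.sign_of_neg hneg, abs_of_neg hneg, r1, r2, r3]
    field_simp
    ring
  · rw [Real.sign_of_pos hpos', abs_of_pos hpos', r1, r2, r3]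
    field_simp
    ring

lemma DaInt_eq {a : ℝ} (ha : 0 < a) {u : ℝ → ℝ} (hu : MemC u) {s : ℝ}
    (hs : s ∈ Set.Ioo (-1:ℝ) 1) :
    DaInt a (Ja a u) s = Real.sign s * Phi a u s := by
  rcases lt_trichotomy s 0 with hneg | hzero | hpos
  · have hsub : Set.Icc s 0 ⊆ Set.Ioo (-1:ℝ) 1 := fun x hx =>
      ⟨lt_of_lt_of_le hs.1 hx.1, lt_of_le_of_lt hx.2 (by norm_num)⟩
    have key : ∫ t in s..(0:ℝ), (1 - t ^ 2) ^ (a - 1) * Ja a u t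
        = (fun y => -Phi a u y) 0 - (fun y => -Phi a u y) s := by
      refine intervalIntegral.integral_eq_sub_of_hasDeriv_right_of_le hneg.le
        (((contOn_Phi ha hu).mono hsub).neg) ?_ ((intable_jint ha hu hs).symm)
      intro x hx
      have hxI : x ∈ Set.Ioo (-1:ℝ) 1 := hsub ⟨hx.1.le, hx.2.le⟩
      have hd := (hasDerivAt_Phi ha hu hxI (ne_of_lt hx.2)).neg
      rw [Real.sign_of_neg hx.2] at hd
      have : -(-1 * ((1 - x ^ 2) ^ (a - 1) * Ja a u x))
          = (1 - x ^ 2) ^ (a - 1) * Ja a u x := by ring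
      rw [this] at hd
      exact hd.hasDerivWithinAt
    simp only [Phi_zero, neg_zero] at key
    rw [Real.sign_of_neg hneg, DaInt, intervalIntegral.integral_symm, key]
    ring
  · subst hzero
    simp [DaInt, Real.sign_zero, intervalIntegral.integral_same]
  · have hsub : Set.Icc 0 s ⊆ Set.Ioo (-1:ℝ) 1 := fun x hx =>
      ⟨lt_of_lt_of_le (by norm_num) hx.1, lt_of_le_of_lt hx.2 hs.2⟩
    have key : ∫ t in (0:ℝ)..s, (1 - t ^ 2) ^ (a - 1) * Ja a u t
        = Phi a u s - Phi a u 0 := by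
      refine intervalIntegral.integral_eq_sub_of_hasDeriv_right_of_le hpos.le
        ((contOn_Phi ha hu).mono hsub) ?_ (intable_jint ha hu hs)
      intro x hx
      have hxI : x ∈ Set.Ioo (-1:ℝ) 1 := hsub ⟨hx.1.le, hx.2.le⟩
      have hd := hasDerivAt_Phi ha hu hxI (ne_of_gt hx.1)
      rw [Real.sign_of_pos hx.1, one_mul] at hd
      exact hd.hasDerivWithinAt
    rw [Real.sign_of_pos hpos, DaInt, key, Phi_zero]
    ring

lemma tendsto_P_one {a : ℝ} (ha : 0 < a) :
    Tendsto (fun s : ℝ => (1 - s ^ 2) ^ a) (𝓝[Set.Ioo (0:ℝ) 1] 1) (𝓝 0) := by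
  have h1 : Tendsto (fun s : ℝ => 1 - s ^ 2) (𝓝[Set.Ioo (0:ℝ) 1] 1) (𝓝 0) := by
    have hcont : Continuous fun s : ℝ => 1 - s ^ 2 := by continuity
    have := (hcont.tendsto 1).mono_left (nhdsWithin_le_nhds (s := Set.Ioo (0:ℝ) 1))
    simpa using this
  have h2 : ContinuousAt (fun x : ℝ => x ^ a) 0 :=
    Real.continuousAt_rpow_const 0 a (Or.inr ha.le)
  have h3 := h2.tendsto.comp h1
  simpa [Real.zero_rpow ha.ne', Function.comp_def] using h3

lemma tendsto_P_negone {a : ℝ} (ha : 0 < a) :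
    Tendsto (fun s : ℝ => (1 - s ^ 2) ^ a) (𝓝[Set.Ioo (-1:ℝ) 0] (-1)) (𝓝 0) := by
  have h1 : Tendsto (fun s : ℝ => 1 - s ^ 2) (𝓝[Set.Ioo (-1:ℝ) 0] (-1)) (𝓝 0) := by
    have hcont : Continuous fun s : ℝ => 1 - s ^ 2 := by continuity
    have := (hcont.tendsto (-1)).mono_left (nhdsWithin_le_nhds (s := Set.Ioo (-1:ℝ) 0))
    simpa using this
  have h2 : ContinuousAt (fun x : ℝ => x ^ a) 0 :=
    Real.continuousAt_rpow_const 0 a (Or.inr ha.le)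
  have h3 := h2.tendsto.comp h1
  simpa [Real.zero_rpow ha.ne', Function.comp_def] using h3

lemma tendsto_vu_one {u : ℝ → ℝ} (hu : MemC u) :
    Tendsto (fun s : ℝ => |s| * u s) (𝓝[Set.Ioo (0:ℝ) 1] 1) (𝓝 (u 1)) := by
  have h1 : ContinuousWithinAt (fun t : ℝ => |t| * u t) (Set.Icc (-1:ℝ) 1 \ {0}) 1 :=
    (continuous_abs.continuousWithinAt).mul (hu.1 1 mem_one)
  have h2 := h1.tendsto.mono_left (nhdsWithin_mono (1:ℝ)
    (show Set.Ioo (0:ℝ) 1 ⊆ Set.Icc (-1:ℝ) 1 \ {0} from fun x hx =>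
      ⟨⟨by linarith [hx.1], hx.2.le⟩,
        by simp only [Set.mem_singleton_iff]; exact ne_of_gt hx.1⟩))
  simpa using h2

lemma tendsto_vu_negone {u : ℝ → ℝ} (hu : MemC u) :
    Tendsto (fun s : ℝ => |s| * u s) (𝓝[Set.Ioo (-1:ℝ) 0] (-1)) (𝓝 (u 1)) := by
  have h1 : ContinuousWithinAt (fun t : ℝ => |t| * u t) (Set.Icc (-1:ℝ) 1 \ {0}) (-1) :=
    (continuous_abs.continuousWithinAt).mul (hu.1 (-1) mem_negone)
  have h2 := h1.tendsto.mono_left (nhdsWithin_mono (-1:ℝ)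
    (show Set.Ioo (-1:ℝ) 0 ⊆ Set.Icc (-1:ℝ) 1 \ {0} from fun x hx =>
      ⟨⟨hx.1.le, by linarith [hx.2]⟩,
        by simp only [Set.mem_singleton_iff]; exact ne_of_lt hx.2⟩))
  rw [hu.2.1]
  simpa using h2

lemma tendsto_abs_one : Tendsto (fun s : ℝ => |s|) (𝓝[Set.Ioo (0:ℝ) 1] 1) (𝓝 1) := by
  have := (continuous_abs.tendsto (1:ℝ)).mono_left (nhdsWithin_le_nhds (s := Set.Ioo (0:ℝ) 1))
  simpa using this

lemma tendsto_abs_negone : Tendsto (fun s : ℝ => |s|) (𝓝[Set.Ioo (-1:ℝ) 0] (-1)) (𝓝 1) := by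
  have := (continuous_abs.tendsto (-1:ℝ)).mono_left (nhdsWithin_le_nhds (s := Set.Ioo (-1:ℝ) 0))
  simpa using this

lemma PJE_eq {a : ℝ} {u : ℝ → ℝ} {s : ℝ} (hs : s ∈ Set.Ioo (-1:ℝ) 1) (hne : s ≠ 0) :
    (1 - s ^ 2) ^ a * Ja a u s
      = ((1 - s ^ 2) ^ a * (-u 1 / 2)) * |s| + |s| * u s
        - 2 * a * (|s| * ((1 - s ^ 2) ^ a * Gf a u s)) := by
  rw [Ja_eq a u hne, JE]
  linear_combination (|s| * u s) * (PW (a := a) hs)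

lemma memDa_two {a : ℝ} (ha : 0 < a) {u : ℝ → ℝ} (hu : MemC u) :
    Tendsto (fun s => (1 - s ^ 2) ^ a * Ja a u s) (𝓝[Set.Ioo (-1:ℝ) 1] 1) (𝓝 0) := by
  rw [nf_one]
  have tA := (tendsto_P_one ha (a := a)).mul_const (-u 1 / 2) |>.mul tendsto_abs_one
  have tB := tendsto_abs_one.mul (limG_one ha hu)
  have tC := tB.const_mul (2 * a)
  have tot := (tA.add (tendsto_vu_one hu)).sub tC
  have hval : 0 * (-u 1 / 2) * 1 + u 1 - 2 * a * (1 * (u 1 / (2 * a))) = 0 := by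
    field_simp
    ring
  rw [hval] at tot
  refine Tendsto.congr' ?_ tot
  filter_upwards [eventually_mem_nhdsWithin] with s hs01
  have hsI : s ∈ Set.Ioo (-1:ℝ) 1 := ⟨by linarith [hs01.1], hs01.2⟩
  exact (PJE_eq hsI (ne_of_gt hs01.1)).symm

lemma memDa_three {a : ℝ} (ha : 0 < a) {u : ℝ → ℝ} (hu : MemC u) :
    Tendsto (fun s => (1 - s ^ 2) ^ a * Ja a u s) (𝓝[Set.Ioo (-1:ℝ) 1] (-1)) (𝓝 0) := by
  rw [nf_negone]
  have tA := (tendsto_P_negone ha (a := a)).mul_const (-u 1 / 2) |>.mul tendsto_abs_negone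
  have tB := tendsto_abs_negone.mul (limG_negone ha hu)
  have tC := tB.const_mul (2 * a)
  have tot := (tA.add (tendsto_vu_negone hu)).sub tC
  have hval : 0 * (-u 1 / 2) * 1 + u 1 - 2 * a * (1 * (u 1 / (2 * a))) = 0 := by
    field_simp
    ring
  rw [hval] at tot
  refine Tendsto.congr' ?_ tot
  filter_upwards [eventually_mem_nhdsWithin] with s hs01
  have hsI : s ∈ Set.Ioo (-1:ℝ) 1 := ⟨hs01.1, by linarith [hs01.2]⟩
  exact (PJE_eq hsI (ne_of_lt hs01.2)).symm

lemma tendsto_Phi_one {a : ℝ} (ha : 0 < a) {u : ℝ → ℝ} (hu : MemC u) :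
    Tendsto (Phi a u) (𝓝[Set.Ioo (0:ℝ) 1] 1)
      (𝓝 (u 1 / (2 * a) - u 1 / (4 * a) * (1 - 0))) := by
  have h1 := limG_one ha hu
  have h2 := ((tendsto_const_nhds (x := (1:ℝ))
    (f := 𝓝[Set.Ioo (0:ℝ) 1] 1)).sub (tendsto_P_one ha (a := a))).const_mul (u 1 / (4 * a))
  exact h1.sub h2

lemma tendsto_Phi_negone {a : ℝ} (ha : 0 < a) {u : ℝ → ℝ} (hu : MemC u) :
    Tendsto (Phi a u) (𝓝[Set.Ioo (-1:ℝ) 0] (-1))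
      (𝓝 (u 1 / (2 * a) - u 1 / (4 * a) * (1 - 0))) := by
  have h1 := limG_negone ha hu
  have h2 := ((tendsto_const_nhds (x := (1:ℝ))
    (f := 𝓝[Set.Ioo (-1:ℝ) 0] (-1))).sub (tendsto_P_negone ha (a := a))).const_mul (u 1 / (4 * a))
  exact h1.sub h2

lemma memDa_four {a : ℝ} (ha : 0 < a) {u : ℝ → ℝ} (hu : MemC u) :
    ∃ L : ℝ, Tendsto (DaInt a (Ja a u)) (𝓝[Set.Ioo (-1:ℝ) 1] 1) (𝓝 L) := by
  refine ⟨u 1 / (2 * a) - u 1 / (4 * a) * (1 - 0), ?_⟩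
  rw [nf_one]
  refine Tendsto.congr' ?_ (tendsto_Phi_one ha hu)
  filter_upwards [eventually_mem_nhdsWithin] with s hs01
  have hsI : s ∈ Set.Ioo (-1:ℝ) 1 := ⟨by linarith [hs01.1], hs01.2⟩
  rw [DaInt_eq ha hu hsI, Real.sign_of_pos hs01.1, one_mul]

lemma memDa_five {a : ℝ} (ha : 0 < a) {u : ℝ → ℝ} (hu : MemC u) :
    ∃ L : ℝ, Tendsto (DaInt a (Ja a u)) (𝓝[Set.Ioo (-1:ℝ) 1] (-1)) (𝓝 L) := by
  refine ⟨-(u 1 / (2 * a) - u 1 / (4 * a) * (1 - 0)), ?_⟩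
  rw [nf_negone]
  refine Tendsto.congr' ?_ (tendsto_Phi_negone ha hu).neg
  filter_upwards [eventually_mem_nhdsWithin] with s hs01
  have hsI : s ∈ Set.Ioo (-1:ℝ) 1 := ⟨hs01.1, by linarith [hs01.2]⟩
  rw [DaInt_eq ha hu hsI, Real.sign_of_neg hs01.2]
  ring

lemma Ja_zero_bound {a : ℝ} {u : ℝ → ℝ} (hu : MemC u) : |Ja a u 0| ≤ CNorm u := by
  obtain ⟨hcu, h11, L, hL⟩ := id hu
  rw [Ja_zero hL a]
  have hcl : (0:ℝ) ∈ closure (Set.Ioc (0:ℝ) 1) := by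
    rw [closure_Ioc (show (0:ℝ) ≠ 1 by norm_num)]
    exact ⟨le_refl 0, by norm_num⟩
  haveI hne : (𝓝[Set.Ioc (0:ℝ) 1] (0:ℝ)).NeBot := mem_closure_iff_nhdsWithin_neBot.mp hcl
  have hmono : 𝓝[Set.Ioc (0:ℝ) 1] (0:ℝ) ≤ 𝓝[Set.Icc (-1:ℝ) 1 \ {0}] 0 :=
    nhdsWithin_mono (0:ℝ) (fun x hx =>
      ⟨⟨by linarith [hx.1], hx.2⟩, by simp only [Set.mem_singleton_iff]; exact ne_of_gt hx.1⟩)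
  have htd := (hL.mono_left hmono).abs
  refine le_of_tendsto htd ?_
  filter_upwards [eventually_mem_nhdsWithin] with t ht
  rw [abs_mul, abs_abs]
  exact memC_bound hu t ⟨⟨by linarith [ht.1], ht.2⟩,
    by simp only [Set.mem_singleton_iff]; exact ne_of_gt ht.1⟩

lemma PG_bound {a : ℝ} (ha : 0 < a) {u : ℝ → ℝ} (hu : MemC u) {s : ℝ}
    (hs : s ∈ Set.Ioo (-1:ℝ) 1) :
    (1 - s ^ 2) ^ a * |Gf a u s| ≤ CNorm u * ((3/4:ℝ) ^ (-(a+1)) + 1 / a) := by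
  have hP0 := P_nonneg a hs
  have hP1 := P_le_one a ha hs
  have hPW := PW (a := a) hs
  have hM0 := cnorm_nonneg hu
  have hc₀0 : (0:ℝ) ≤ (3/4:ℝ) ^ (-(a+1)) := Real.rpow_nonneg (by norm_num) _
  have h1 := mul_le_mul_of_nonneg_left (G_bound ha hu hs) hP0
  refine le_trans h1 ?_
  have h2 : (1 - s ^ 2) ^ a * (CNorm u * ((3/4:ℝ) ^ (-(a+1)) + (1 - s ^ 2) ^ (-a) / a))
      = CNorm u * ((1 - s ^ 2) ^ a * (3/4:ℝ) ^ (-(a+1))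
        + ((1 - s ^ 2) ^ a * (1 - s ^ 2) ^ (-a)) / a) := by ring
  rw [h2, hPW]
  have h3 : (1 - s ^ 2) ^ a * (3/4:ℝ) ^ (-(a+1)) ≤ (3/4:ℝ) ^ (-(a+1)) := by
    nlinarith
  have h4 : (0:ℝ) ≤ 1 / a := by positivity
  nlinarith

lemma PJa_bound {a : ℝ} (ha : 0 < a) {u : ℝ → ℝ} (hu : MemC u) {s : ℝ}
    (hs : s ∈ Set.Ioo (-1:ℝ) 1) :
    (1 - s ^ 2) ^ a * |Ja a u s| ≤ CNorm u * (7/2 + 2 * a * (3/4:ℝ) ^ (-(a+1))) := by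
  have hM0 := cnorm_nonneg hu
  have hc₀0 : (0:ℝ) ≤ (3/4:ℝ) ^ (-(a+1)) := Real.rpow_nonneg (by norm_num) _
  have hP0 := P_nonneg a hs
  have hP1 := P_le_one a ha hs
  by_cases hs0 : s = 0
  · subst hs0
    have h1 : ((1:ℝ) - 0 ^ 2) ^ a = 1 := by norm_num
    rw [h1, one_mul]
    refine le_trans (Ja_zero_bound hu) ?_
    nlinarith [mul_nonneg hM0 (by positivity : (0:ℝ) ≤ 2 * a * (3/4:ℝ) ^ (-(a+1))),
      mul_nonneg hM0 hc₀0]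
  · rw [Ja_eq a u hs0]
    have hPW := PW (a := a) hs
    have h1 := mul_le_mul_of_nonneg_left (JE_bound ha hu hs hs0) hP0
    refine le_trans h1 ?_
    have h2 : (1 - s ^ 2) ^ a * (CNorm u * (1/2 + 3 * (1 - s ^ 2) ^ (-a) + 2 * a * (3/4:ℝ) ^ (-(a+1))))
        = CNorm u * ((1 - s ^ 2) ^ a * (1/2) + 3 * ((1 - s ^ 2) ^ a * (1 - s ^ 2) ^ (-a))
          + 2 * a * ((1 - s ^ 2) ^ a * (3/4:ℝ) ^ (-(a+1)))) := by ring
    rw [h2, hPW]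
    have h3 : (1 - s ^ 2) ^ a * (3/4:ℝ) ^ (-(a+1)) ≤ (3/4:ℝ) ^ (-(a+1)) := by nlinarith
    have h4 : (1 - s ^ 2) ^ a * (1/2 : ℝ) ≤ 1/2 := by nlinarith
    nlinarith [mul_le_mul_of_nonneg_left h3 (by positivity : (0:ℝ) ≤ 2 * a)]

lemma abs_sign_le (s : ℝ) : |Real.sign s| ≤ 1 := by
  rcases lt_trichotomy s 0 with h | h | h
  · rw [Real.sign_of_neg h]; norm_num
  · rw [h, Real.sign_zero]; norm_num
  · rw [Real.sign_of_pos h]; norm_num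

lemma DaInt_bound {a : ℝ} (ha : 0 < a) {u : ℝ → ℝ} (hu : MemC u) {s : ℝ}
    (hs : s ∈ Set.Ioo (-1:ℝ) 1) :
    |DaInt a (Ja a u) s| ≤ CNorm u * ((3/4:ℝ) ^ (-(a+1)) + 1 / a + 1 / (2 * a)) := by
  have hM0 := cnorm_nonneg hu
  have hP0 := P_nonneg a hs
  have hP1 := P_le_one a ha hs
  have hu1 : |u 1| ≤ CNorm u := by
    have := memC_bound hu 1 mem_one; simpa using this
  rw [DaInt_eq ha hu hs, abs_mul]
  have h1 : |Real.sign s| * |Phi a u s| ≤ |Phi a u s| := by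
    nlinarith [abs_sign_le s, abs_nonneg (Phi a u s)]
  refine le_trans h1 ?_
  have h2 : |Phi a u s| ≤ (1 - s ^ 2) ^ a * |Gf a u s| + |u 1| / (4 * a) * |1 - (1 - s ^ 2) ^ a| := by
    rw [Phi]
    refine le_trans (abs_sub _ _) ?_
    rw [abs_mul, abs_of_nonneg hP0, abs_mul, abs_div, abs_of_nonneg (by positivity : (0:ℝ) ≤ 4 * a)]
  have h3 : |1 - (1 - s ^ 2) ^ a| ≤ 1 := by
    rw [abs_of_nonneg (by linarith)]; linarith
  have h4 : |u 1| / (4 * a) * |1 - (1 - s ^ 2) ^ a| ≤ CNorm u * (1 / (2 * a)) := by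
    have h5 : |u 1| / (4 * a) * |1 - (1 - s ^ 2) ^ a| ≤ |u 1| / (4 * a) * 1 :=
      mul_le_mul_of_nonneg_left h3 (by positivity)
    have h6 : |u 1| / (4 * a) ≤ CNorm u * (1 / (2 * a)) := by
      have h7 : |u 1| / (4 * a) ≤ CNorm u / (4 * a) := by gcongr
      have h9 : CNorm u / (4 * a) ≤ CNorm u * (1 / (2 * a)) := by
        rw [div_eq_mul_inv, one_div]
        exact mul_le_mul_of_nonneg_left (inv_anti₀ (by positivity) (by linarith)) hM0
      linarith
    linarith
  have h5 := PG_bound ha hu hs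
  have h8 : CNorm u * ((3/4:ℝ) ^ (-(a+1)) + 1 / a) + CNorm u * (1 / (2 * a))
      = CNorm u * ((3/4:ℝ) ^ (-(a+1)) + 1 / a + 1 / (2 * a)) := by ring
  linarith [h2, h4, h5]


/-- `J_a` maps `𝒞` into `D^a`, and it is bounded: there is `C > 0` with
`‖J_a(u)‖_{D^a} ≤ C ‖u‖_𝒞` for all `u ∈ 𝒞`. -/
theorem Ja_welldefined_continuous (a : ℝ) (ha : 0 < a) :
    (∀ u : ℝ → ℝ, MemC u → MemDa a (Ja a u)) ∧
    ∃ C : ℝ, 0 < C ∧ ∀ u : ℝ → ℝ, MemC u → DaNorm a (Ja a u) ≤ C * CNorm u := by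
  constructor
  · intro u hu
    exact ⟨contOn_Ja ha hu, memDa_two ha hu, memDa_three ha hu,
      memDa_four ha hu, memDa_five ha hu⟩
  · refine ⟨(7/2 + 2 * a * (3/4:ℝ) ^ (-(a+1)))
      + ((3/4:ℝ) ^ (-(a+1)) + 1 / a + 1 / (2 * a)), ?_, ?_⟩
    · have hpos := Real.rpow_pos_of_pos (show (0:ℝ) < 3/4 by norm_num) (-(a+1))
      have h1 : (0:ℝ) < 1 / a := by positivity
      have h2 : (0:ℝ) < 1 / (2 * a) := by positivity
      nlinarith [mul_pos (show (0:ℝ) < 2 * a by linarith) hpos]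
    · intro u hu
      haveI : Nonempty (Set.Ioo (-1:ℝ) 1) := ⟨⟨0, by norm_num⟩⟩
      rw [DaNorm]
      have h1 : (⨆ s : Set.Ioo (-1:ℝ) 1, (1 - (s:ℝ) ^ 2) ^ a * |Ja a u (s:ℝ)|)
          ≤ CNorm u * (7/2 + 2 * a * (3/4:ℝ) ^ (-(a+1))) :=
        ciSup_le (fun s => PJa_bound ha hu s.2)
      have h2 : (⨆ s : Set.Ioo (-1:ℝ) 1, |DaInt a (Ja a u) (s:ℝ)|)
          ≤ CNorm u * ((3/4:ℝ) ^ (-(a+1)) + 1 / a + 1 / (2 * a)) :=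
        ciSup_le (fun s => DaInt_bound ha hu s.2)
      calc (⨆ s : Set.Ioo (-1:ℝ) 1, (1 - (s:ℝ) ^ 2) ^ a * |Ja a u (s:ℝ)|)
            + ⨆ s : Set.Ioo (-1:ℝ) 1, |DaInt a (Ja a u) (s:ℝ)|
          ≤ CNorm u * (7/2 + 2 * a * (3/4:ℝ) ^ (-(a+1)))
            + CNorm u * ((3/4:ℝ) ^ (-(a+1)) + 1 / a + 1 / (2 * a)) := add_le_add h1 h2
        _ = ((7/2 + 2 * a * (3/4:ℝ) ^ (-(a+1)))
            + ((3/4:ℝ) ^ (-(a+1)) + 1 / a + 1 / (2 * a))) * CNorm u := by ring
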